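/- arXiv:2108.05848 — 9 statements merged into one kernel-verified Lean document; each statement's English description precedes it below -/
import Mathlib

section
/- If a position j in a sequence S over alphabet Σ belongs to an occurrence of a pattern P (i.e., there exists i with S[i..i+k-1] = P and i ≤ j ≤ i+k-1, where k = |P|), then substituting the character at position j creates at most one new occurrence of P. That is, there do not exist two distinct pairs (i₁,σ₁) and (i₂,σ₂) with i₁ ≠ i₂ such that replacing S[j] by σ₁ creates a new P-occurrence starting at i₁ and replacing S[j] by σ₂ creates a new P-occurrence starting at i₂ (the two substitute characters may be equal or distinct), where in each case the new occurrence was not present in S. -/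
/-!
Substituting `S[j]` can only create an occurrence of `P` whose window contains `j` and which
mismatches `S` exactly at `j`. Comparing two such windows, or one of them with the given
occurrence at `i`, shows that `P` has the period equal to their offset, except across the one
pair of positions that both windows map to `j`. With three windows around `j`, two of these
near-periods always chain together to force `P[j - i₁] = S[j]` or `P[j - i₂] = S[j]`: directly
when `i` is outside `[i₁, i₂]`, and via a rotation argument when `i` lies between them.
-/

open Function Set

theorem Function.Injective.comp_eq_of_eqOn_compl_singleton {X β : Type*} [Finite X]
    {f : X → X} (hf : Injective f) {g : X → β} {a : X} (h : EqOn (g ∘ f) g {a}ᶜ) :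
    g ∘ f = g := by
  suffices hfa : g (f a) = g a by
    funext x
    by_cases hx : x = a
    · rw [hx, comp_apply, hfa]
    · exact h hx
  by_contra hfa
  -- `f` maps the finite set `B` into itself, hence onto itself, yet `f a ∈ B` while `a ∉ B`.
  set B := {x | g x ≠ g a}
  have hmaps : MapsTo f B B := fun x hx => by
    have hxa : x ≠ a := fun hxa => hx (congrArg g hxa)
    simpa only [B, mem_ofPred_eq, ← comp_apply (f := g), h hxa] using hx
  obtain ⟨x, hxB, hxa⟩ := ((B.toFinite.injOn_iff_bijOn_of_mapsTo hmaps).1 hf.injOn).surjOn hfa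
  exact hxB (congrArg g (hf hxa))

theorem List.prefix_drop_iff {α : Type*} {P S : List α} {u : ℕ} :
    P <+: S.drop u ↔ ∀ t < P.length, S[u + t]? = P[t]? := by
  simp only [List.prefix_iff_getElem?, List.getElem?_drop]
  exact forall₂_congr fun t ht => by rw [List.getElem?_eq_getElem ht]

section Windows

variable {β : Type*}

def HasPeriodExcept (p : ℕ → β) (k d e : ℕ) : Prop :=
  ∀ t, t + d < k → t ≠ e → p (t + d) = p t

def MatchesExcept (s p : ℕ → β) (k u j : ℕ) : Prop :=
  ∀ t < k, u + t ≠ j → s (u + t) = p t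

/-- Stepping up by `q` below `e + r` and down by `r` from `e + r` on is a rotation of
`[e, e + r + q)` all of whose steps except the one from `e + r` preserve `p`. -/
theorem HasPeriodExcept.apply_add_eq {p : ℕ → β} {k q r e : ℕ}
    (hq : HasPeriodExcept p k q (e + r)) (hr : HasPeriodExcept p k r e) (hq0 : 0 < q)
    (hk : e + r + q < k) : p (e + r) = p e := by
  let rot : Fin (r + q) → Fin (r + q) := fun x =>
    if hx : (x : ℕ) < r then ⟨x + q, by omega⟩ else ⟨x - r, by omega⟩
  have hrot : Injective rot := by
    intro x y hxy
    simp only [rot, Fin.ext_iff] at hxy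
    ext
    split_ifs at hxy <;> simp only at hxy <;> omega
  have hrot_eq : EqOn ((fun x : Fin (r + q) => p (e + x)) ∘ rot) (fun x => p (e + x))
      {⟨r, by omega⟩}ᶜ := by
    intro x hx
    simp only [mem_compl_iff, mem_singleton_iff, Fin.ext_iff] at hx
    simp only [comp_apply, rot]
    split_ifs with hxr
    · exact add_assoc e x q ▸ hq (e + x) (by omega) (by omega)
    · have h := hr (e + (x - r)) (by omega) (by omega)
      rw [show e + (x - r) + r = e + x by omega] at h
      exact h.symm
  have h := congrFun (hrot.comp_eq_of_eqOn_compl_singleton hrot_eq) ⟨r, by omega⟩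
  simpa [rot] using h.symm

theorem MatchesExcept.hasPeriodExcept {s p : ℕ → β} {k u v j : ℕ}
    (hu : MatchesExcept s p k u j) (hv : MatchesExcept s p k v j) (huv : u ≤ v) :
    HasPeriodExcept p k (v - u) (j - v) := by
  intro t htk htj
  rw [← hu (t + (v - u)) htk (by omega), ← hv t (by omega) (by omega)]
  congr 1
  omega

theorem MatchesExcept.apply_eq_or_apply_eq {s p : ℕ → β} {k i u v j : ℕ}
    (hi : MatchesExcept s p k i j) (hu : MatchesExcept s p k u j)
    (hv : MatchesExcept s p k v j) (hij : i ≤ j) (hjk : j < i + k) (huj : u ≤ j)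
    (hjku : j < u + k) (hvj : v ≤ j) (hjkv : j < v + k) (huv : u ≠ v) :
    p (j - u) = p (j - i) ∨ p (j - v) = p (j - i) := by
  wlog hlt : u < v generalizing u v
  · exact (this hv hu hvj hjkv huj hjku huv.symm (by omega)).symm
  rcases lt_trichotomy i u with hiu | rfl | hui
  · have h₁ := hi.hasPeriodExcept hu hiu.le
    have h₂ := hu.hasPeriodExcept hv hlt.le
    right
    calc p (j - v) = p (j - v + (u - i)) := (h₁ _ (by omega) (by omega)).symm
      _ = p (j - v + (u - i) + (v - u)) := (h₂ _ (by omega) (by omega)).symm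
      _ = p (j - i) := by congr 1; omega
  · exact .inl rfl
  rcases lt_trichotomy i v with hiv | rfl | hvi
  · have h₁ := hu.hasPeriodExcept hi hui.le
    have h₂ := hi.hasPeriodExcept hv hiv.le
    rw [show j - i = j - v + (v - i) by omega] at h₁ ⊢
    exact .inr (h₁.apply_add_eq h₂ (by omega) (by omega)).symm
  · exact .inr rfl
  · have h₁ := hu.hasPeriodExcept hv hlt.le
    have h₂ := hv.hasPeriodExcept hi hvi.le
    left
    calc p (j - u) = p (j - i + (v - u) + (i - v)) := by congr 1; omega
      _ = p (j - i + (v - u)) := h₂ _ (by omega) (by omega)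
      _ = p (j - i) := h₁ _ (by omega) (by omega)

end Windows

section Substitution

variable {α : Type*} {S P : List α} {u j : ℕ} {σ : α}

theorem matchesExcept_of_prefix_drop_set (h : P <+: (S.set j σ).drop u) :
    MatchesExcept (S[·]?) (P[·]?) P.length u j := fun t ht hne => by
  show S[u + t]? = P[t]?
  rw [← List.getElem?_set_ne hne.symm]
  exact List.prefix_drop_iff.1 h t ht

theorem le_and_lt_and_getElem?_ne_of_prefix_drop_set (h : P <+: (S.set j σ).drop u) (hn : ¬ P <+: S.drop u) :
    u ≤ j ∧ j < u + P.length ∧ S[j]? ≠ P[j - u]? := by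
  obtain ⟨t, ht, hne⟩ : ∃ t < P.length, S[u + t]? ≠ P[t]? := by
    simpa [List.prefix_drop_iff] using hn
  obtain rfl : u + t = j := by_contra fun hj => hne (matchesExcept_of_prefix_drop_set h t ht hj)
  exact ⟨by omega, by omega, by simpa using hne⟩

end Substitution

theorem single_substitution_creates_at_most_one_new_match_general
    {α : Type*} (S P : List α) (k : ℕ) (hk : P.length = k) (j : ℕ)
    (hj : ∃ i, P <+: S.drop i ∧ i ≤ j ∧ j < i + k) :
    ¬ ∃ (i₁ i₂ : ℕ) (σ₁ σ₂ : α), i₁ ≠ i₂ ∧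
      (P <+: (S.set j σ₁).drop i₁ ∧ ¬ P <+: S.drop i₁) ∧
      (P <+: (S.set j σ₂).drop i₂ ∧ ¬ P <+: S.drop i₂) := by
  subst hk
  obtain ⟨i, hi, hij, hjk⟩ := hj
  rintro ⟨i₁, i₂, σ₁, σ₂, hne, ⟨h₁, h₁'⟩, ⟨h₂, h₂'⟩⟩
  have hi' : MatchesExcept (S[·]?) (P[·]?) P.length i j := fun t ht _ =>
    List.prefix_drop_iff.1 hi t ht
  have hSj : S[j]? = P[j - i]? := by
    simpa [show i + (j - i) = j by omega] using List.prefix_drop_iff.1 hi (j - i) (by omega)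
  obtain ⟨hj₁, hjk₁, hS₁⟩ := le_and_lt_and_getElem?_ne_of_prefix_drop_set h₁ h₁'
  obtain ⟨hj₂, hjk₂, hS₂⟩ := le_and_lt_and_getElem?_ne_of_prefix_drop_set h₂ h₂'
  rcases hi'.apply_eq_or_apply_eq (matchesExcept_of_prefix_drop_set h₁)
    (matchesExcept_of_prefix_drop_set h₂) hij hjk hj₁ hjk₁ hj₂ hjk₂ hne with e | e
  · exact hS₁ (hSj.trans e.symm)
  · exact hS₂ (hSj.trans e.symm)

/-- If position `j` belongs to a `P`-match in `S`, then substituting the character at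
position `j` creates at most one new `P`-match: there are no two distinct starting
positions `i₁ ≠ i₂` and substitute characters `σ₁, σ₂` such that each substitution
creates a new occurrence of `P` (at `i₁`, resp. `i₂`) that was not present in `S`. -/
theorem single_substitution_creates_at_most_one_new_match
    {α : Type*} (S P : List α) (k : ℕ) (hk : P.length = k) (hk1 : 1 ≤ k) (j : ℕ)
    (hj : ∃ i, P <+: S.drop i ∧ i ≤ j ∧ j < i + k) :
    ¬ ∃ (i₁ i₂ : ℕ) (σ₁ σ₂ : α), i₁ ≠ i₂ ∧
      (P <+: (S.set j σ₁).drop i₁ ∧ ¬ P <+: S.drop i₁) ∧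
      (P <+: (S.set j σ₂).drop i₂ ∧ ¬ P <+: S.drop i₂) :=
  single_substitution_creates_at_most_one_new_match_general S P k hk j hj
end

section
/- Let Σ be an alphabet with |Σ| > 2, let S be a string over Σ, let P be a pattern of length k, and let j be a position belonging to at least one P-match in S. Then there exist at least |Σ| − 2 characters σ ≠ S[j] such that replacing S[j] by σ eliminates every P-match containing position j and creates no new P-match. -/
private lemma prefix_iff_pointwise {α : Type*} (L P : List α) (i : ℕ) :
    P <+: L.drop i ↔ ∀ t < P.length, L[i + t]? = P[t]? := by
  constructor
  · rintro ⟨T, hT⟩ t ht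
    rw [← List.getElem?_drop, ← hT, List.getElem?_append, if_pos ht]
  · intro hp
    rw [List.prefix_iff_eq_take]
    apply List.ext_getElem?
    intro n
    rw [List.getElem?_take]
    by_cases hn : n < P.length
    · rw [if_pos hn, List.getElem?_drop, hp n hn]
    · rw [if_neg hn, List.getElem?_eq_none (by omega)]

private lemma key_three {α : Type*} (S P : List α) (j a m c : ℕ)
    (ham : a < m) (hmc : m < c) (hcj : c ≤ j) (hja : j < a + P.length)
    (hA : ∀ t < P.length, a + t ≠ j → S[a + t]? = P[t]?)
    (hM : ∀ t < P.length, m + t ≠ j → S[m + t]? = P[t]?)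
    (hC : ∀ t < P.length, c + t ≠ j → S[c + t]? = P[t]?) :
    P[j - a]? = P[j - c]? := by
  have h1 : P[(j - (c - m)) - a]? = P[j - c]? := by
    have e1 := hA ((j - (c - m)) - a) (by omega) (by omega)
    have e2 := hM (j - c) (by omega) (by omega)
    rw [show a + ((j - (c - m)) - a) = m + (j - c) by omega] at e1
    rw [← e1, e2]
  have h2 : P[j - a]? = P[(j - (c - m)) - a]? := by
    have e1 := hM (j - a) (by omega) (by omega)
    have e2 := hC ((j - (c - m)) - a) (by omega) (by omega)
    rw [show c + ((j - (c - m)) - a) = m + (j - a) by omega] at e2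
    rw [← e1, ← e2]
  rw [h2, h1]

private lemma window_props {α : Type*} (S P : List α) (j : ℕ) (hjS : j < S.length)
    (σ : α) (i : ℕ) (hij : i ≤ j) (hji : j < i + P.length)
    (h : P <+: (S.set j σ).drop i) :
    (∀ t < P.length, i + t ≠ j → S[i + t]? = P[t]?) ∧ P[j - i]? = some σ := by
  have hp := (prefix_iff_pointwise _ _ _).1 h
  constructor
  · intro t ht hne
    rw [← hp t ht, List.getElem?_set_ne (by omega)]
  · have hv := hp (j - i) (by omega)
    rw [show i + (j - i) = j by omega] at hv
    rw [← hv, List.getElem?_set_self hjS]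

private lemma three_windows {α : Type*} {S P : List α} {j : ℕ}
    {i0 i1 i2 : ℕ} {σ0 σ1 σ2 : α}
    (off0 : ∀ t < P.length, i0 + t ≠ j → S[i0 + t]? = P[t]?)
    (v0 : P[j - i0]? = some σ0) (b0 : i0 ≤ j) (b0' : j < i0 + P.length)
    (off1 : ∀ t < P.length, i1 + t ≠ j → S[i1 + t]? = P[t]?)
    (v1 : P[j - i1]? = some σ1) (b1 : i1 ≤ j) (b1' : j < i1 + P.length)
    (off2 : ∀ t < P.length, i2 + t ≠ j → S[i2 + t]? = P[t]?)
    (v2 : P[j - i2]? = some σ2) (b2 : i2 ≤ j) (b2' : j < i2 + P.length)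
    (d01 : σ0 ≠ σ1) (d02 : σ0 ≠ σ2) : σ1 = σ2 := by
  by_contra d12
  have ne01 : i0 ≠ i1 := by rintro rfl; rw [v0] at v1; exact d01 (Option.some.inj v1)
  have ne02 : i0 ≠ i2 := by rintro rfl; rw [v0] at v2; exact d02 (Option.some.inj v2)
  have ne12 : i1 ≠ i2 := by rintro rfl; rw [v1] at v2; exact d12 (Option.some.inj v2)
  rcases Nat.lt_trichotomy i0 i1 with h01 | h01 | h01
  · rcases Nat.lt_trichotomy i1 i2 with h12 | h12 | h12
    · have := key_three S P j i0 i1 i2 h01 h12 b2 b0' off0 off1 off2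
      rw [v0, v2] at this; exact d02 (Option.some.inj this)
    · exact ne12 h12
    · rcases Nat.lt_trichotomy i0 i2 with h02 | h02 | h02
      · have := key_three S P j i0 i2 i1 h02 h12 b1 b0' off0 off2 off1
        rw [v0, v1] at this; exact d01 (Option.some.inj this)
      · exact ne02 h02
      · have := key_three S P j i2 i0 i1 h02 h01 b1 b2' off2 off0 off1
        rw [v2, v1] at this; exact d12 (Option.some.inj this).symm
  · exact ne01 h01
  · rcases Nat.lt_trichotomy i0 i2 with h02 | h02 | h02
    · have := key_three S P j i1 i0 i2 h01 h02 b2 b1' off1 off0 off2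
      rw [v1, v2] at this; exact d12 (Option.some.inj this)
    · exact ne02 h02
    · rcases Nat.lt_trichotomy i1 i2 with h12 | h12 | h12
      · have := key_three S P j i1 i2 i0 h12 h02 b0 b1' off1 off2 off0
        rw [v1, v0] at this; exact d01 (Option.some.inj this).symm
      · exact ne12 h12
      · have := key_three S P j i2 i1 i0 h12 h01 b0 b2' off2 off1 off0
        rw [v2, v0] at this; exact d02 (Option.some.inj this).symm

/-- Over an alphabet with more than two characters, if position `j` belongs to a
`P`-match in `S`, then there are at least `|Σ| - 2` characters `σ ≠ S[j]` such that
replacing `S[j]` by `σ` eliminates every `P`-match containing position `j`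
and creates no new `P`-match. -/
theorem exists_many_safe_substitutions
    {α : Type*} [Fintype α] [DecidableEq α] (h : 2 < Fintype.card α)
    (S P : List α) (j : ℕ) (hjS : j < S.length)
    (hj : ∃ i, P <+: S.drop i ∧ i ≤ j ∧ j < i + P.length) :
    ∃ T : Finset α, Fintype.card α - 2 ≤ T.card ∧ ∀ σ ∈ T,
      σ ≠ S.get ⟨j, hjS⟩ ∧
      (∀ i, i ≤ j → j < i + P.length → ¬ P <+: (S.set j σ).drop i) ∧
      (∀ i, P <+: (S.set j σ).drop i → P <+: S.drop i) := by
  classical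
  obtain ⟨i0, h0, h0a, h0b⟩ := hj
  have hs0 : S.get ⟨j, hjS⟩ = S[j] := rfl
  have v0 : P[j - i0]? = some (S.get ⟨j, hjS⟩) := by
    have hv := (prefix_iff_pointwise S P i0).1 h0 (j - i0) (by omega)
    rw [show i0 + (j - i0) = j by omega] at hv
    rw [← hv, hs0, List.getElem?_eq_getElem hjS]
  have off0 : ∀ t < P.length, i0 + t ≠ j → S[i0 + t]? = P[t]? :=
    fun t ht _ => (prefix_iff_pointwise S P i0).1 h0 t ht
  set Bad : Finset α := Finset.univ.filter
    (fun σ => σ ≠ S.get ⟨j, hjS⟩ ∧ ∃ i, i ≤ j ∧ j < i + P.length ∧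
      P <+: (S.set j σ).drop i) with hBadDef
  have hBad : Bad.card ≤ 1 := by
    apply Finset.card_le_one.2
    intro σ1 hσ1 σ2 hσ2
    rw [hBadDef, Finset.mem_filter] at hσ1 hσ2
    obtain ⟨-, n1, i1, b1, b1', p1⟩ := hσ1
    obtain ⟨-, n2, i2, b2, b2', p2⟩ := hσ2
    obtain ⟨off1, v1⟩ := window_props S P j hjS σ1 i1 b1 b1' p1
    obtain ⟨off2, v2⟩ := window_props S P j hjS σ2 i2 b2 b2' p2
    exact three_windows off0 v0 h0a h0b off1 v1 b1 b1' off2 v2 b2 b2'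
      (Ne.symm n1) (Ne.symm n2)
  refine ⟨Finset.univ \ insert (S.get ⟨j, hjS⟩) Bad, ?_, ?_⟩
  · have hc1 : (insert (S.get ⟨j, hjS⟩) Bad).card ≤ 2 :=
      le_trans (Finset.card_insert_le _ _) (by omega)
    have hc2 : (Finset.univ \ insert (S.get ⟨j, hjS⟩) Bad).card
        = Fintype.card α - (insert (S.get ⟨j, hjS⟩) Bad).card := by
      rw [Finset.card_sdiff_of_subset (Finset.subset_univ _), Finset.card_univ]
    omega
  · intro σ hσ
    rw [Finset.mem_sdiff, Finset.mem_insert] at hσ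
    push_neg at hσ
    obtain ⟨-, hne, hnotbad⟩ := hσ
    rw [hBadDef, Finset.mem_filter] at hnotbad
    have hnoex : ¬ ∃ i, i ≤ j ∧ j < i + P.length ∧ P <+: (S.set j σ).drop i :=
      fun he => hnotbad ⟨Finset.mem_univ σ, hne, he⟩
    refine ⟨hne, fun i hij hji hp => hnoex ⟨i, hij, hji, hp⟩, ?_⟩
    intro i hp
    have hne' : ∀ t < P.length, i + t ≠ j := by
      intro t ht he
      exact hnoex ⟨i, by omega, by omega, hp⟩
    rw [prefix_iff_pointwise] at hp ⊢
    intro t ht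
    rw [← hp t ht, List.getElem?_set_ne (hne' t ht).symm]
end

section
/- If the alphabet has more than two characters, then for any string S and pattern P, the minimum size of an eliminating set for P in S equals the minimum size of a hitting set for the collection of intervals of P-matches in S. -/
/-!
Every eliminating set is a hitting set, since an occurrence of `P` whose window avoids the
substituted positions survives the substitution. Conversely, the characters on a hitting set
can be fixed one position `m` at a time. An occurrence through `m` after setting `T[m] := a`
means that `T` already agrees with `P` on the window except at `m`, and that `a = P[m - i]`,
where `i` is the start of the window. If the windows starting at `i₁ < i₂ < i₃` are all of this
kind, comparing `T` at `m - (i₃ - i₂)` and at `m + (i₂ - i₁)` gives `P[m - i₁] = P[m - i₃]`,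
so at most two characters are ruled out and a third letter destroys every occurrence through
`m` without creating occurrences elsewhere. Hence every hitting set is eliminating, and the two
sets of sizes coincide.
-/

/-- Substituting the characters of `S` at the positions of `E` according to `c`. -/
def substitute {α : Type*} (S : List α) (E : Finset ℕ) (c : ℕ → α) : List α :=
  S.mapIdx (fun i a => if i ∈ E then c i else a)

namespace PatternElimination

open Finset

theorem card_image_le_two_of_forall_lt_lt {ι β : Type*} [LinearOrder ι] [DecidableEq β]
    {s : Finset ι} {f : ι → β}
    (h : ∀ x ∈ s, ∀ y ∈ s, ∀ z ∈ s, x < y → y < z → f x = f z) : #(s.image f) ≤ 2 := by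
  rcases s.eq_empty_or_nonempty with rfl | hs
  · simp
  set lo := s.min' hs
  obtain ⟨y, hy⟩ : ∃ y, ∀ x ∈ s, f x = f lo ∨ f x = f y := by
    rcases (s.erase lo).eq_empty_or_nonempty with he | hs'
    · refine ⟨lo, fun x hx => Or.inl ?_⟩
      by_contra hne
      have : x ∈ s.erase lo := mem_erase.2 ⟨fun hx' => hne (by rw [hx']), hx⟩
      simp [he] at this
    · refine ⟨(s.erase lo).min' hs', fun x hx => ?_⟩
      by_cases hxlo : x = lo
      · exact Or.inl (by rw [hxlo])
      have hxe : x ∈ s.erase lo := mem_erase.2 ⟨hxlo, hx⟩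
      rcases ((s.erase lo).min'_le x hxe).lt_or_eq with hlt | heq
      · have hmin := (s.erase lo).min'_mem hs'
        exact Or.inl (h lo (s.min'_mem hs) _ (mem_of_mem_erase hmin) x hx
          (s.min'_lt_of_mem_erase_min' hs hmin) hlt).symm
      · exact Or.inr (by rw [heq])
  calc #(s.image f) ≤ #{f lo, f y} := card_le_card fun b hb => by
        obtain ⟨x, hx, rfl⟩ := mem_image.1 hb
        rcases hy x hx with e | e <;> simp [e]
    _ ≤ 2 := card_le_two

variable {α : Type*}

theorem prefix_drop_iff {P T : List α} {i : ℕ} :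
    P <+: T.drop i ↔ ∀ d < P.length, T[i + d]? = P[d]? := by
  simp only [List.prefix_iff_getElem?, List.getElem?_drop]
  exact forall₂_congr fun d hd => by rw [List.getElem?_eq_getElem hd]

theorem prefix_drop_congr {P T T' : List α} {i : ℕ}
    (h : ∀ d < P.length, T[i + d]? = T'[i + d]?) : P <+: T.drop i ↔ P <+: T'.drop i := by
  simp only [prefix_drop_iff]
  exact forall₂_congr fun d hd => by rw [h d hd]

def MatchesAwayFrom (T P : List α) (m i : ℕ) : Prop :=
  i ≤ m ∧ m < i + P.length ∧ ∀ d < P.length, i + d ≠ m → T[i + d]? = P[d]?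

theorem matchesAwayFrom_of_prefix_drop_set {T P : List α} {m i : ℕ} {a : α}
    (him : i ≤ m) (hmi : m < i + P.length) (h : P <+: (T.set m a).drop i) :
    MatchesAwayFrom T P m i ∧ P[m - i]? = some a := by
  rw [prefix_drop_iff] at h
  refine ⟨⟨him, hmi, fun d hd hne => ?_⟩, ?_⟩
  · rw [← List.getElem?_set_ne (Ne.symm hne) (a := a)]
    exact h d hd
  · have hm := h (m - i) (by omega)
    rw [show i + (m - i) = m by omega, List.getElem?_set_self',
      List.getElem?_eq_getElem (by omega : m - i < P.length)] at hm
    rw [List.getElem?_eq_getElem (by omega : m - i < P.length)]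
    cases hT : T[m]? <;> simp_all

theorem MatchesAwayFrom.getElem?_eq {T P : List α} {m i₁ i₂ i₃ : ℕ}
    (h₁ : MatchesAwayFrom T P m i₁) (h₂ : MatchesAwayFrom T P m i₂)
    (h₃ : MatchesAwayFrom T P m i₃) (h₁₂ : i₁ < i₂) (h₂₃ : i₂ < i₃) :
    P[m - i₁]? = P[m - i₃]? := by
  obtain ⟨-, hk₁, h₁⟩ := h₁
  obtain ⟨-, -, h₂⟩ := h₂
  obtain ⟨hm₃, -, h₃⟩ := h₃
  calc P[m - i₁]? = T[i₂ + (m - i₁)]? := (h₂ _ (by omega) (by omega)).symm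
    _ = T[i₃ + (m - i₃ + (i₂ - i₁))]? := by rw [show i₂ + (m - i₁) = i₃ + (m - i₃ + (i₂ - i₁)) by omega]
    _ = P[m - i₃ + (i₂ - i₁)]? := h₃ _ (by omega) (by omega)
    _ = T[i₁ + (m - i₃ + (i₂ - i₁))]? := (h₁ _ (by omega) (by omega)).symm
    _ = T[i₂ + (m - i₃)]? := by rw [show i₁ + (m - i₃ + (i₂ - i₁)) = i₂ + (m - i₃) by omega]
    _ = P[m - i₃]? := h₂ _ (by omega) (by omega)

theorem exists_forall_not_prefix_drop_set [Fintype α] (hα : 2 < Fintype.card α)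
    (T P : List α) (m : ℕ) :
    ∃ a : α, ∀ i ≤ m, m < i + P.length → ¬ P <+: (T.set m a).drop i := by
  classical
  set bad := (range (m + 1)).filter (MatchesAwayFrom T P m)
  have hbad : #(bad.image fun i => P[m - i]?) ≤ 2 :=
    card_image_le_two_of_forall_lt_lt fun x hx _ hy z hz hxy hyz =>
      (mem_filter.1 hx).2.getElem?_eq (mem_filter.1 hy).2 (mem_filter.1 hz).2 hxy hyz
  have hlt : #(bad.image fun i => P[m - i]?) < #(univ.image (some : α → Option α)) := by
    rw [card_image_of_injective _ (Option.some_injective α), card_univ]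
    omega
  obtain ⟨_, ha, hnot⟩ := exists_mem_notMem_of_card_lt_card hlt
  obtain ⟨a, -, rfl⟩ := mem_image.1 ha
  refine ⟨a, fun i him hmi hpre => hnot ?_⟩
  obtain ⟨hi, hPa⟩ := matchesAwayFrom_of_prefix_drop_set him hmi hpre
  exact mem_image.2 ⟨i, mem_filter.2 ⟨mem_range.2 (by omega), hi⟩, hPa⟩

theorem substitute_insert (S : List α) (E : Finset ℕ) (c : ℕ → α) (m : ℕ) (a : α) :
    substitute S (insert m E) (Function.update c m a) = (substitute S E c).set m a := by
  apply List.ext_getElem?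
  intro x
  by_cases hx : m = x
  · subst hx
    by_cases hm : m < S.length <;> simp [substitute, hm]
  · simp [substitute, List.getElem?_set_ne hx, Ne.symm hx]

theorem prefix_drop_substitute_iff {S P : List α} {E : Finset ℕ} {c : ℕ → α} {i : ℕ}
    (hE : ¬ ∃ j ∈ E, i ≤ j ∧ j < i + P.length) :
    P <+: (substitute S E c).drop i ↔ P <+: S.drop i :=
  prefix_drop_congr fun d hd => by
    have hd : i + d ∉ E := fun h => hE ⟨i + d, h, by omega, by omega⟩
    simp [substitute, hd]

theorem exists_substitute_not_prefix_of_meets [Fintype α] (hα : 2 < Fintype.card α)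
    (S P : List α) (H : Finset ℕ) :
    ∃ c : ℕ → α, ∀ i, (∃ j ∈ H, i ≤ j ∧ j < i + P.length) →
      ¬ P <+: (substitute S H c).drop i := by
  induction H using Finset.induction_on with
  | empty =>
    obtain ⟨a⟩ : Nonempty α := Fintype.card_pos_iff.mp (by omega)
    exact ⟨fun _ => a, by simp⟩
  | insert m H _ ih =>
    obtain ⟨c, hc⟩ := ih
    obtain ⟨a, ha⟩ := exists_forall_not_prefix_drop_set hα (substitute S H c) P m
    refine ⟨Function.update c m a, fun i ⟨j, hj, hij, hji⟩ => ?_⟩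
    rw [substitute_insert]
    by_cases hm : i ≤ m ∧ m < i + P.length
    · exact ha i hm.1 hm.2
    · have hjH : j ∈ H := (mem_insert.1 hj).resolve_left (by rintro rfl; exact hm ⟨hij, hji⟩)
      rw [prefix_drop_congr fun d hd => List.getElem?_set_ne (by omega)]
      exact hc i ⟨j, hjH, hij, hji⟩

theorem exists_substitute_not_prefix_of_hitting [Fintype α] (hα : 2 < Fintype.card α)
    {S P : List α} {H : Finset ℕ}
    (hH : ∀ i, P <+: S.drop i → ∃ j ∈ H, i ≤ j ∧ j < i + P.length) :
    ∃ c : ℕ → α, ∀ i, ¬ P <+: (substitute S H c).drop i := by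
  obtain ⟨c, hc⟩ := exists_substitute_not_prefix_of_meets hα S P H
  refine ⟨c, fun i hi => ?_⟩
  by_cases hmeet : ∃ j ∈ H, i ≤ j ∧ j < i + P.length
  · exact hc i hmeet hi
  · exact hmeet (hH i ((prefix_drop_substitute_iff hmeet).1 hi))

theorem hitting_of_forall_not_prefix {S P : List α} {E : Finset ℕ} {c : ℕ → α}
    (hE : ∀ i, ¬ P <+: (substitute S E c).drop i) :
    ∀ i, P <+: S.drop i → ∃ j ∈ E, i ≤ j ∧ j < i + P.length := fun i hi => by
  by_contra hmeet
  exact hE i ((prefix_drop_substitute_iff hmeet).2 hi)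

end PatternElimination

open PatternElimination in
theorem min_eliminating_eq_min_hitting_general
    {α : Type*} [Fintype α] (h : 2 < Fintype.card α)
    (S P : List α) :
    sInf {n : ℕ | ∃ (E : Finset ℕ) (c : ℕ → α), E.card = n ∧
        ∀ i, ¬ P <+: (substitute S E c).drop i}
      = sInf {n : ℕ | ∃ H : Finset ℕ, H.card = n ∧
        ∀ i, P <+: S.drop i → ∃ j ∈ H, i ≤ j ∧ j < i + P.length} := by
  congr 1
  ext n
  constructor
  · rintro ⟨E, c, rfl, hE⟩
    exact ⟨E, rfl, hitting_of_forall_not_prefix hE⟩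
  · rintro ⟨H, rfl, hH⟩
    obtain ⟨c, hc⟩ := exists_substitute_not_prefix_of_hitting h hH
    exact ⟨H, c, rfl, hc⟩

/-- Over an alphabet with more than two characters, the minimum size of an eliminating
set for `P` in `S` equals the minimum size of a set of positions hitting every
`P`-match interval `[i, i + |P| - 1]` of `S`. -/
theorem min_eliminating_eq_min_hitting
    {α : Type*} [Fintype α] (h : 2 < Fintype.card α)
    (S P : List α) (hP : 1 ≤ P.length) :
    sInf {n : ℕ | ∃ (E : Finset ℕ) (c : ℕ → α), E.card = n ∧
        ∀ i, ¬ P <+: (substitute S E c).drop i}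
      = sInf {n : ℕ | ∃ H : Finset ℕ, H.card = n ∧
        ∀ i, P <+: S.drop i → ∃ j ∈ H, i ≤ j ∧ j < i + P.length} :=
  min_eliminating_eq_min_hitting_general h S P
end

section
/- The greedy algorithm for hitting a set of intervals — process intervals in increasing order of right endpoint, and whenever the current interval is not yet hit, add its right endpoint to the hitting set — produces a hitting set of minimum cardinality. -/
/-- The greedy interval-hitting algorithm: process intervals in order; whenever the
current interval `[l, r]` is not yet hit by the accumulated set `H`, add its right
endpoint `r` to `H`. -/
noncomputable def greedyHit (H : Finset ℤ) : List (ℤ × ℤ) → Finset ℤ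
  | [] => H
  | (l, r) :: rest =>
      if ((Finset.Icc l r).filter (· ∈ H)).Nonempty then greedyHit H rest
      else greedyHit (insert r H) rest

/-! Let `r₁ < r₂ < ⋯` be the points chosen by the greedy algorithm, `rᵢ` chosen for the interval
`[lᵢ, rᵢ]`. Since `[lᵢ, rᵢ]` was not hit, `rᵢ₋₁ < lᵢ`, so any hitting set has a point in
`[lᵢ, rᵢ]`, strictly above all earlier greedy points. Counting the points of a competitor `H'`
lying above the current greedy set therefore bounds the number of points still to be chosen. -/

open Finset

namespace IntervalHitting

def Hits (H : Finset ℤ) (p : ℤ × ℤ) : Prop := ∃ x ∈ H, p.1 ≤ x ∧ x ≤ p.2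

theorem filter_Icc_nonempty_iff_hits {H : Finset ℤ} {l r : ℤ} :
    ((Icc l r).filter (· ∈ H)).Nonempty ↔ Hits H (l, r) := by
  simp only [Finset.Nonempty, mem_filter, mem_Icc, Hits]
  grind

theorem greedyHit_cons_of_hits {H : Finset ℤ} {l r : ℤ} (rest : List (ℤ × ℤ))
    (h : Hits H (l, r)) : greedyHit H ((l, r) :: rest) = greedyHit H rest := by
  rw [greedyHit, if_pos (filter_Icc_nonempty_iff_hits.mpr h)]

theorem greedyHit_cons_of_not_hits {H : Finset ℤ} {l r : ℤ} (rest : List (ℤ × ℤ))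
    (h : ¬Hits H (l, r)) : greedyHit H ((l, r) :: rest) = greedyHit (insert r H) rest := by
  rw [greedyHit, if_neg (filter_Icc_nonempty_iff_hits.not.mpr h)]

theorem Hits.mono {H H' : Finset ℤ} {p : ℤ × ℤ} (h : Hits H p) (hH : H ⊆ H') : Hits H' p :=
  let ⟨x, hx, hlx, hxr⟩ := h
  ⟨x, hH hx, hlx, hxr⟩

theorem subset_greedyHit (H : Finset ℤ) (I : List (ℤ × ℤ)) : H ⊆ greedyHit H I := by
  induction I generalizing H with
  | nil => rfl
  | cons p rest ih =>
    obtain ⟨l, r⟩ := p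
    by_cases h : Hits H (l, r)
    · rw [greedyHit_cons_of_hits rest h]
      exact ih H
    · rw [greedyHit_cons_of_not_hits rest h]
      exact (subset_insert r H).trans (ih _)

theorem hits_greedyHit (H : Finset ℤ) {I : List (ℤ × ℤ)} (hI : ∀ p ∈ I, p.1 ≤ p.2) :
    ∀ p ∈ I, Hits (greedyHit H I) p := by
  induction I generalizing H with
  | nil => simp
  | cons q rest ih =>
    obtain ⟨l, r⟩ := q
    have ih' := fun H => ih H fun p hp => hI p (List.mem_cons_of_mem _ hp)
    have hlr : l ≤ r := hI _ List.mem_cons_self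
    by_cases h : Hits H (l, r)
    · rw [greedyHit_cons_of_hits rest h]
      rintro p (_ | ⟨_, hp⟩)
      exacts [h.mono (subset_greedyHit H rest), ih' H p hp]
    · rw [greedyHit_cons_of_not_hits rest h]
      rintro p (_ | ⟨_, hp⟩)
      exacts [⟨r, subset_greedyHit _ rest (mem_insert_self r H), hlr, le_rfl⟩, ih' _ p hp]

theorem lt_of_not_hits {H : Finset ℤ} {l r : ℤ} (h : ¬Hits H (l, r)) (hH : ∀ y ∈ H, y ≤ r) :
    ∀ y ∈ H, y < l := fun y hy =>
  lt_of_not_ge fun hly => h ⟨y, hy, hly, hH y hy⟩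

theorem card_above_insert_lt {H H' : Finset ℤ} {l r : ℤ} (h : ¬Hits H (l, r))
    (hH : ∀ y ∈ H, y ≤ r) (hH' : Hits H' (l, r)) :
    #{x ∈ H' | ∀ y ∈ insert r H, y < x} < #{x ∈ H' | ∀ y ∈ H, y < x} := by
  obtain ⟨x₀, hx₀, hlx₀, hx₀r⟩ := hH'
  have hHl := lt_of_not_hits h hH
  refine card_lt_card <| (ssubset_iff_of_subset ?_).mpr ⟨x₀, ?_, ?_⟩
  · exact monotone_filter_right _ fun x _ hx y hy => hx y (mem_insert_of_mem hy)
  · exact mem_filter.mpr ⟨hx₀, fun y hy => (hHl y hy).trans_le hlx₀⟩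
  · simp only [mem_filter, mem_insert, forall_eq_or_imp, not_and]
    exact fun _ hrx => absurd hx₀r hrx.not_ge

theorem card_greedyHit_le {I : List (ℤ × ℤ)} (hsorted : I.Pairwise (fun p q => p.2 ≤ q.2))
    {H H' : Finset ℤ} (hH : ∀ x ∈ H, ∀ p ∈ I, x ≤ p.2) (hH' : ∀ p ∈ I, Hits H' p) :
    #(greedyHit H I) ≤ #H + #{x ∈ H' | ∀ y ∈ H, y < x} := by
  induction I generalizing H with
  | nil => exact Nat.le_add_right _ _
  | cons q rest ih =>
    obtain ⟨l, r⟩ := q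
    obtain ⟨hr_rest, hsorted_rest⟩ := List.pairwise_cons.mp hsorted
    have hH'_rest := fun p hp => hH' p (List.mem_cons_of_mem _ hp)
    by_cases h : Hits H (l, r)
    · rw [greedyHit_cons_of_hits rest h]
      exact ih hsorted_rest (fun x hx p hp => hH x hx p (List.mem_cons_of_mem _ hp)) hH'_rest
    · rw [greedyHit_cons_of_not_hits rest h]
      have hHr : ∀ y ∈ H, y ≤ r := fun y hy => hH y hy _ List.mem_cons_self
      have hlr : l ≤ r := by obtain ⟨x, -, hlx, hxr⟩ := hH' _ List.mem_cons_self; omega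
      have hrH : r ∉ H := fun hr => (lt_of_not_hits h hHr r hr).not_ge hlr
      have hinsert : ∀ x ∈ insert r H, ∀ p ∈ rest, x ≤ p.2 := by
        simp only [mem_insert, forall_eq_or_imp]
        exact ⟨hr_rest, fun x hx p hp => hH x hx p (List.mem_cons_of_mem _ hp)⟩
      calc #(greedyHit (insert r H) rest)
          ≤ #(insert r H) + #{x ∈ H' | ∀ y ∈ insert r H, y < x} :=
            ih hsorted_rest hinsert hH'_rest
        _ = #H + (#{x ∈ H' | ∀ y ∈ insert r H, y < x} + 1) := by
          rw [card_insert_of_notMem hrH]; ring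
        _ ≤ #H + #{x ∈ H' | ∀ y ∈ H, y < x} :=
          Nat.add_le_add_left (card_above_insert_lt h hHr (hH' _ List.mem_cons_self)) _

end IntervalHitting

open IntervalHitting in
/-- The greedy algorithm, run on a finite list of intervals sorted by increasing
right endpoint, produces a hitting set of minimum cardinality. -/
theorem greedy_hitting_set_minimal
    (I : List (ℤ × ℤ)) (hI : ∀ p ∈ I, p.1 ≤ p.2)
    (hsorted : I.Pairwise (fun p q => p.2 ≤ q.2)) :
    (∀ p ∈ I, ∃ x ∈ greedyHit ∅ I, p.1 ≤ x ∧ x ≤ p.2) ∧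
    (∀ H' : Finset ℤ, (∀ p ∈ I, ∃ x ∈ H', p.1 ≤ x ∧ x ≤ p.2) →
      (greedyHit ∅ I).card ≤ H'.card) := by
  refine ⟨hits_greedyHit ∅ hI, fun H' hH' => ?_⟩
  calc #(greedyHit ∅ I)
      ≤ #(∅ : Finset ℤ) + #{x ∈ H' | ∀ y ∈ (∅ : Finset ℤ), y < x} :=
        card_greedyHit_le hsorted (by simp) hH'
    _ = #H' := by simp
end

section
/- Let 𝒫 be a finite set of nonempty forbidden patterns over alphabet Σ, and define the KMP-style FSM: states V are the elements of pref(𝒫) (prefixes of patterns in 𝒫, including the empty string ε) that have no suffix belonging to 𝒫; the initial state is ε; f(v, σ) is undefined if some suffix of vσ lies in 𝒫, and otherwise equals the longest suffix of vσ that lies in pref(𝒫). Then this FSM generates exactly the set of 𝒫-clean strings, and moreover for every generated string S, the final state of its generating path equals the longest suffix of S that belongs to pref(𝒫). -/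
/-- `pref(Ps)`: the set of prefixes of patterns in `Ps` (including the empty string
when `Ps` is nonempty). -/
def prefP {α : Type*} (Ps : Set (List α)) : Set (List α) :=
  {w | ∃ P ∈ Ps, w <+: P}

/-- One transition of the KMP-style FSM: from state `v` on character `σ`, the transition
is defined iff no suffix of `vσ` lies in `Ps`, and then leads to the longest suffix of
`vσ` lying in `pref(Ps)`. -/
def KmpStep {α : Type*} (Ps : Set (List α)) (v : List α) (σ : α) (w : List α) : Prop :=
  (∀ u, u <:+ v ++ [σ] → u ∉ Ps) ∧
  w <:+ v ++ [σ] ∧ w ∈ prefP Ps ∧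
  ∀ u, u <:+ v ++ [σ] → u ∈ prefP Ps → u.length ≤ w.length

/-- `KmpRun Ps S v`: reading the string `S` from the initial state `ε` of the KMP FSM,
all transitions are defined and the run ends in state `v`. -/
inductive KmpRun {α : Type*} (Ps : Set (List α)) : List α → List α → Prop
  | nil : KmpRun Ps [] []
  | snoc (S : List α) (σ : α) (v w : List α) :
      KmpRun Ps S v → KmpStep Ps v σ w → KmpRun Ps (S ++ [σ]) w

/-!
The run keeps the invariant that its state is the longest suffix of the text read so far
lying in `pref(Ps)`. Since a suffix `uσ` of `Sσ` in `pref(Ps)` has `u ∈ pref(Ps)`, maximality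
of the state `v` makes `u` a suffix of `v`; so every pattern ending at the new character is a
suffix of `vσ`, which is exactly what the transition tests, and every step preserves the invariant.
-/

def IsLongestSuffixIn {α : Type*} (T : Set (List α)) (S v : List α) : Prop :=
  v <:+ S ∧ v ∈ T ∧ ∀ u, u <:+ S → u ∈ T → u.length ≤ v.length

theorem exists_isLongestSuffixIn {α : Type*} {T : Set (List α)} (hT : [] ∈ T) (S : List α) :
    ∃ v, IsLongestSuffixIn T S v := by
  have hfin : {u | u <:+ S ∧ u ∈ T}.Finite :=
    S.tails.finite_toSet.subset fun u hu => (List.mem_tails _ _).mpr hu.1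
  obtain ⟨v, hv, hmax⟩ :=
    hfin.exists_maximalFor List.length _ ⟨[], List.nil_suffix, hT⟩
  refine ⟨v, hv.1, hv.2, fun u hu huT => ?_⟩
  by_contra! hlt
  exact absurd (hmax ⟨hu, huT⟩ hlt.le) (not_le.mpr hlt)

section prefP

variable {α : Type*} {Ps : Set (List α)}

theorem nil_mem_prefP (hne : Ps.Nonempty) : [] ∈ prefP Ps :=
  let ⟨P, hP⟩ := hne
  ⟨P, hP, List.nil_prefix⟩

theorem subset_prefP : Ps ⊆ prefP Ps :=
  fun P hP => ⟨P, hP, List.prefix_rfl⟩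

theorem mem_prefP_of_prefix {u w : List α} (h : u <+: w) (hw : w ∈ prefP Ps) :
    u ∈ prefP Ps :=
  let ⟨P, hP, hwP⟩ := hw
  ⟨P, hP, h.trans hwP⟩

theorem IsLongestSuffixIn.suffix_append_singleton {S v u : List α} {σ : α}
    (hv : IsLongestSuffixIn (prefP Ps) S v) (hu : u <:+ S ++ [σ]) (hupref : u ∈ prefP Ps) :
    u <:+ v ++ [σ] := by
  obtain ⟨hvS, -, hvmax⟩ := hv
  rcases List.suffix_concat_iff.mp hu with rfl | ⟨u', rfl, hu'S⟩
  · exact List.nil_suffix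
  · have hu'pref : u' ∈ prefP Ps := mem_prefP_of_prefix (List.prefix_append u' [σ]) hupref
    have hu'v : u' <:+ v :=
      List.suffix_of_suffix_length_le hu'S hvS (hvmax u' hu'S hu'pref)
    exact List.suffix_append_self_iff.mpr hu'v

theorem IsLongestSuffixIn.kmpStep {S v w : List α} {σ : α}
    (hv : IsLongestSuffixIn (prefP Ps) S v) (hstep : KmpStep Ps v σ w) :
    IsLongestSuffixIn (prefP Ps) (S ++ [σ]) w := by
  obtain ⟨-, hwv, hwpref, hwmax⟩ := hstep
  refine ⟨hwv.trans (List.suffix_append_self_iff.mpr hv.1), hwpref, fun u hu hupref => ?_⟩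
  exact hwmax u (hv.suffix_append_singleton hu hupref) hupref

theorem KmpRun.isLongestSuffixIn (hne : Ps.Nonempty) {S v : List α} (h : KmpRun Ps S v) :
    IsLongestSuffixIn (prefP Ps) S v := by
  induction h with
  | nil => exact ⟨List.suffix_rfl, nil_mem_prefP hne, fun u hu _ => hu.length_le⟩
  | snoc S σ v w _ hstep ih => exact ih.kmpStep hstep

theorem KmpRun.not_infix (hne : Ps.Nonempty) (heps : [] ∉ Ps) {S v : List α}
    (h : KmpRun Ps S v) : ∀ P ∈ Ps, ¬ P <:+: S := by
  induction h with
  | nil => exact fun P hP hPS => heps (List.infix_nil.mp hPS ▸ hP)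
  | snoc S σ v w hrun hstep ih =>
    intro P hP hPS
    rcases List.infix_concat_iff.mp hPS with hsuf | hinf
    · exact hstep.1 P
        ((hrun.isLongestSuffixIn hne).suffix_append_singleton hsuf (subset_prefP hP)) hP
    · exact ih P hP hinf

theorem exists_kmpRun_of_not_infix (hne : Ps.Nonempty) {S : List α}
    (hclean : ∀ P ∈ Ps, ¬ P <:+: S) : ∃ v, KmpRun Ps S v := by
  induction S using List.reverseRecOn with
  | nil => exact ⟨[], KmpRun.nil⟩
  | append_singleton S σ ih =>
    obtain ⟨v, hrun⟩ :=
      ih fun P hP hPS => hclean P hP (hPS.trans (List.prefix_append S [σ]).isInfix)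
    have hvσ : v ++ [σ] <:+ S ++ [σ] :=
      List.suffix_append_self_iff.mpr (hrun.isLongestSuffixIn hne).1
    obtain ⟨w, hw⟩ := exists_isLongestSuffixIn (nil_mem_prefP hne) (v ++ [σ])
    exact ⟨w, .snoc S σ v w hrun ⟨fun u hu hP => hclean u hP (hu.trans hvσ).isInfix, hw⟩⟩

end prefP

/-- The KMP FSM generates exactly the `Ps`-clean strings, and for every generated string
`S` the final state of its generating path is the longest suffix of `S` in `pref(Ps)`. -/
theorem kmp_generates_exactly_clean
    {α : Type*} (Ps : Set (List α)) (hne : Ps.Nonempty) (heps : ([] : List α) ∉ Ps) :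
    (∀ S : List α, (∃ v, KmpRun Ps S v) ↔ ∀ w ∈ Ps, ¬ w <:+: S) ∧
    (∀ S v, KmpRun Ps S v →
      v <:+ S ∧ v ∈ prefP Ps ∧ ∀ u, u <:+ S → u ∈ prefP Ps → u.length ≤ v.length) :=
  ⟨fun _ => ⟨fun ⟨_, h⟩ => h.not_infix hne heps, exists_kmpRun_of_not_infix hne⟩,
    fun _ _ h => h.isLongestSuffixIn hne⟩
end

section
/- Let 𝒫 be a set of nonempty patterns, v ∈ pref(𝒫) a string with no suffix in 𝒫, σ a character, and g(v) the longest proper suffix of v in pref(𝒫). Then vσ has a suffix in 𝒫 if and only if vσ ∈ 𝒫 or g(v)σ has a suffix in 𝒫. -/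
/-- `IsG Ps w gw`: `gw = g(w)`, the longest proper suffix of `w` lying in `pref(Ps)`. -/
def IsG {α : Type*} (Ps : Set (List α)) (w gw : List α) : Prop :=
  gw <:+ w ∧ gw ≠ w ∧ gw ∈ prefP Ps ∧
  ∀ u, u <:+ w → u ≠ w → u ∈ prefP Ps → u.length ≤ gw.length

lemma suffix_of_suffix_len {α : Type*} {s t w : List α} (hs : s <:+ w) (ht : t <:+ w)
    (h : s.length ≤ t.length) : s <:+ t := by
  rcases (List.suffix_or_suffix_of_suffix hs ht) with h' | h'
  · exact h'
  · have := h'.eq_of_length (le_antisymm h'.length_le h)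
    exact this ▸ List.suffix_refl _

lemma suffix_concat_cases {α : Type*} {u w : List α} {σ : α} (h : u <:+ w ++ [σ]) :
    u = [] ∨ ∃ u', u' <:+ w ∧ u = u' ++ [σ] := by
  rcases u.eq_nil_or_concat with rfl | ⟨u', a, rfl⟩
  · exact Or.inl rfl
  · right
    obtain ⟨t, ht⟩ := h
    have : (t ++ u') ++ [a] = w ++ [σ] := by simpa using ht
    have h1 := List.append_inj' this rfl
    exact ⟨u', ⟨t, h1.1⟩, by simp [List.concat_eq_append, List.singleton_injective h1.2]⟩

/-- For `v ∈ pref(Ps)` with no suffix in `Ps`, and any character `σ`: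
`vσ` has a suffix in `Ps` iff `vσ ∈ Ps` or `g(v)σ` has a suffix in `Ps`. -/
theorem suffix_in_patterns_iff
    {α : Type*} (Ps : Set (List α)) (hne : Ps.Nonempty) (heps : ([] : List α) ∉ Ps)
    (v : List α) (hv : v ∈ prefP Ps) (hvV : ∀ u, u <:+ v → u ∉ Ps)
    (gv : List α) (hgv : IsG Ps v gv) (σ : α) :
    (∃ u, u <:+ v ++ [σ] ∧ u ∈ Ps) ↔
      (v ++ [σ] ∈ Ps ∨ ∃ u, u <:+ gv ++ [σ] ∧ u ∈ Ps) := by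
  obtain ⟨hsuf, hneq, hpref, hmax⟩ := hgv
  constructor
  · rintro ⟨u, hu, huPs⟩
    by_cases hueq : u = v ++ [σ]
    · exact Or.inl (hueq ▸ huPs)
    · right
      rcases suffix_concat_cases hu with rfl | ⟨u', hu', rfl⟩
      · exact absurd huPs heps
      · have hune : u' ≠ v := fun h => hueq (by rw [h])
        have hu'pref : u' ∈ prefP Ps := ⟨u' ++ [σ], huPs, by simp⟩
        have hlen := hmax u' hu' hune hu'pref
        have : u' <:+ gv := suffix_of_suffix_len hu' hsuf hlen
        obtain ⟨t, rfl⟩ := this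
        exact ⟨u' ++ [σ], ⟨t, by simp⟩, huPs⟩
  · rintro (h | ⟨u, hu, huPs⟩)
    · exact ⟨v ++ [σ], List.suffix_refl _, h⟩
    · obtain ⟨t, rfl⟩ := hsuf
      exact ⟨u, hu.trans ⟨t, by simp⟩, huPs⟩
end

section
/- Over the binary alphabet {0,1}, if a position j of a binary string S belongs to two or more distinct P-matches (occurrences of a pattern P), then flipping the bit at position j eliminates all P-matches containing j and creates no new P-match. -/
lemma flip_cycle {d : ℕ} [NeZero d] (g : ZMod d → Bool) (δ r : ZMod d)
    (hA : ∀ s, s ≠ r → g s = g (s + δ)) (hB : g r ≠ g (r + δ)) : False := by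
  have hm : 0 < addOrderOf δ := addOrderOf_pos δ
  have key : ∀ k, 0 < k → k ≤ addOrderOf δ → g (r + δ) = g (r + k • δ) := by
    intro k
    induction k with
    | zero => intro h; omega
    | succ n ih =>
      intro _ hk
      rcases Nat.eq_zero_or_pos n with h0 | hn
      · subst h0; simp
      · have h1 := ih hn (by omega)
        have hne : r + n • δ ≠ r := by
          intro h
          have h2 : n • δ = 0 := add_eq_left.mp h
          have h3 := Nat.le_of_dvd hn (addOrderOf_dvd_of_nsmul_eq_zero h2)
          omega
        calc g (r + δ) = g (r + n • δ) := h1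
          _ = g (r + n • δ + δ) := hA _ hne
          _ = g (r + (n + 1) • δ) := by rw [succ_nsmul]; ring_nf
  have h := key (addOrderOf δ) hm le_rfl
  rw [addOrderOf_nsmul_eq_zero, add_zero] at h
  exact hB h.symm

lemma prefix_getD {S P : List Bool} {i : ℕ} (h : P <+: S.drop i) {t : ℕ}
    (ht : t < P.length) : S.getD (i + t) false = P.getD t false := by
  have hl : P.length ≤ S.length - i := by simpa using h.length_le
  have h1 : i + t < S.length := by omega
  rw [List.getD_eq_getElem _ _ h1, List.getD_eq_getElem _ _ ht]
  have := h.getElem ht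
  simpa using this.symm

lemma set_getD_ne (S : List Bool) (j x : ℕ) (b : Bool) (hx : x ≠ j) :
    (S.set j b).getD x false = S.getD x false := by
  rw [List.getD_eq_getElem?_getD, List.getD_eq_getElem?_getD,
    List.getElem?_set_ne (by omega)]

lemma set_getD_eq (S : List Bool) (j : ℕ) (b : Bool) (hj : j < S.length) :
    (S.set j b).getD j false = b := by
  rw [List.getD_eq_getElem?_getD, List.getElem?_set_self (by omega)]
  simp

lemma no_new_match (S P : List Bool) (j : ℕ) (hjS : j < S.length) (b : Bool)
    (hb : b = !(S.getD j false))
    (i₁ i₂ : ℕ) (h12 : i₁ < i₂)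
    (ho1 : P <+: S.drop i₁) (hj1 : j < i₁ + P.length)
    (ho2 : P <+: S.drop i₂) (h2j : i₂ ≤ j)
    (i : ℕ) (hij : i ≤ j) (hji : j < i + P.length)
    (hpre : P <+: (S.set j b).drop i) : False := by
  set p := P.length with hp
  set d := i₂ - i₁ with hdd
  have hd : 0 < d := by omega
  have hdp : d < p := by omega
  haveI : NeZero d := ⟨hd.ne'⟩
  set F : ℕ → Bool := fun t => P.getD t false with hF
  set T : ℕ → Bool := fun x => S.getD x false with hT
  set T' : ℕ → Bool := fun x => (S.set j b).getD x false with hT'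
  have hocc1 : ∀ t, t < p → T (i₁ + t) = F t := fun t ht => prefix_getD ho1 ht
  have hocc2 : ∀ t, t < p → T (i₂ + t) = F t := fun t ht => prefix_getD ho2 ht
  have hocc' : ∀ t, t < p → T' (i + t) = F t := fun t ht => prefix_getD hpre ht
  have hTne : ∀ x, x ≠ j → T' x = T x := fun x hx => set_getD_ne S j x b hx
  have hTj : T' j = !(T j) := by
    show (S.set j b).getD j false = !(S.getD j false)
    rw [set_getD_eq S j b hjS, hb]
  have hper : ∀ t, t + d < p → F t = F (t + d) := by
    intro t ht
    have h1 := hocc2 t (by omega)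
    have h2 := hocc1 (t + d) ht
    rw [← h1, ← h2]
    congr 1
    omega
  have hmod : ∀ t, t < p → F t = F (t % d) := by
    intro t
    induction t using Nat.strong_induction_on with
    | _ t ih =>
      intro ht
      by_cases htd : t < d
      · rw [Nat.mod_eq_of_lt htd]
      · push_neg at htd
        have h1 : (t - d) + d = t := by omega
        have h2 := hper (t - d) (by omega)
        rw [h1] at h2
        rw [← h2, ih (t - d) (by omega) (by omega), Nat.mod_eq_sub_mod htd]
  have hQ : ∀ u, u < d + p → T (i₁ + u) = F (u % d) := by
    intro u hu
    by_cases hup : u < p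
    · rw [hocc1 u hup, ← hmod u hup]
    · push_neg at hup
      have h1 : i₁ + u = i₂ + (u - d) := by omega
      rw [h1, hocc2 (u - d) (by omega), hmod (u - d) (by omega),
        ← Nat.mod_eq_sub_mod (by omega)]
  set δ : ZMod d := (i : ZMod d) - (i₁ : ZMod d) with hδ
  set r₀ : ZMod d := ((j - i : ℕ) : ZMod d) with hr₀
  set g : ZMod d → Bool := fun r => F r.val with hg
  have hval : ∀ m : ℕ, g (m : ZMod d) = F (m % d) := by
    intro m; rw [hg]; simp [ZMod.val_natCast]
  have hcastval : ∀ r : ZMod d, ((r.val : ℕ) : ZMod d) = r := fun r =>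
    ZMod.natCast_rightInverse r
  have hA : ∀ r : ZMod d, r ≠ r₀ → g r = g (r + δ) := by
    intro r hr
    have hrv : r.val < d := ZMod.val_lt r
    set n := i₁ - i with hn
    set m := n + d - 1 - r.val with hm
    set t := r.val + d * (m / d) with ht
    have hdm := Nat.div_add_mod m d
    have hmlt := Nat.mod_lt m hd
    have ht1 : n ≤ t ∧ t ≤ n + d - 1 := by omega
    have htm : t % d = r.val := by
      rw [ht, Nat.add_mul_mod_self_left, Nat.mod_eq_of_lt hrv]
    have htp : t < p := by omega
    have hi₁it : i₁ ≤ i + t := by omega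
    set u := i + t - i₁ with hu
    have hub : u < d + p := by omega
    have htr : (t : ZMod d) = r := by
      rw [← ZMod.natCast_mod t d, htm]; exact hcastval r
    have hne : i + t ≠ j := by
      intro h
      apply hr
      have h1 : (t : ZMod d) = r₀ := by rw [hr₀]; congr 1; omega
      rw [← htr, h1]
    have hucast : ((u : ℕ) : ZMod d) = r + δ := by
      rw [hu, Nat.cast_sub hi₁it, Nat.cast_add, htr, hδ]; ring
    calc g r = F r.val := rfl
      _ = F (t % d) := by rw [htm]
      _ = F t := (hmod t htp).symm
      _ = T' (i + t) := (hocc' t htp).symm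
      _ = T (i + t) := hTne _ hne
      _ = T (i₁ + u) := by congr 1; omega
      _ = F (u % d) := hQ u hub
      _ = g ((u : ℕ) : ZMod d) := (hval u).symm
      _ = g (r + δ) := by rw [hucast]
  have hB : g r₀ ≠ g (r₀ + δ) := by
    have hji' : j - i < p := by omega
    have e1 : g r₀ = T' j := by
      rw [hr₀, hval, ← hmod _ hji', ← hocc' _ hji']
      congr 1
      omega
    have hu2b : j - i₁ < d + p := by omega
    have e2 : g (r₀ + δ) = T j := by
      have hc : ((j - i₁ : ℕ) : ZMod d) = r₀ + δ := by
        rw [Nat.cast_sub (by omega : i₁ ≤ j), hr₀, Nat.cast_sub hij, hδ]; ring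
      rw [← hc, hval, ← hQ _ hu2b]
      congr 1
      omega
    rw [e1, e2, hTj]
    simp
  exact flip_cycle g δ r₀ hA hB

lemma prefix_transfer (S P : List Bool) (j : ℕ) (b : Bool) (i : ℕ)
    (hmiss : j < i ∨ i + P.length ≤ j)
    (hpre : P <+: (S.set j b).drop i) : P <+: S.drop i := by
  rw [List.prefix_iff_eq_take] at hpre ⊢
  rw [hpre]
  apply List.ext_getElem
  · simp
  · intro t h1 h2
    simp only [List.getElem_take, List.getElem_drop]
    have h3 : t < P.length := by simp at h1; omega
    rw [List.getElem_set_ne (by omega)]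

/-- Over the binary alphabet, if a position `j` of `S` belongs to two distinct
`P`-matches, then flipping the bit at position `j` eliminates all `P`-matches
containing `j` and creates no new `P`-match. -/
theorem flip_in_overlap_is_safe
    (S P : List Bool) (j : ℕ) (hjS : j < S.length)
    (hj : ∃ i₁ i₂, i₁ ≠ i₂ ∧
      (P <+: S.drop i₁ ∧ i₁ ≤ j ∧ j < i₁ + P.length) ∧
      (P <+: S.drop i₂ ∧ i₂ ≤ j ∧ j < i₂ + P.length)) :
    (∀ i, i ≤ j → j < i + P.length →
      ¬ P <+: (S.set j (! S.get ⟨j, hjS⟩)).drop i) ∧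
    (∀ i, P <+: (S.set j (! S.get ⟨j, hjS⟩)).drop i → P <+: S.drop i) := by
  obtain ⟨i₁, i₂, hne, ⟨ho1, h1j, hj1⟩, ⟨ho2, h2j, hj2⟩⟩ := hj
  have hb : (!S.get ⟨j, hjS⟩) = !(S.getD j false) := by
    rw [List.getD_eq_getElem _ _ hjS]
    rfl
  have main : ∀ i, i ≤ j → j < i + P.length →
      ¬ P <+: (S.set j (! S.get ⟨j, hjS⟩)).drop i := by
    intro i hij hji hpre
    rcases hne.lt_or_gt with h | h
    · exact no_new_match S P j hjS _ hb i₁ i₂ h ho1 hj1 ho2 h2j i hij hji hpre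
    · exact no_new_match S P j hjS _ hb i₂ i₁ h ho2 hj2 ho1 h1j i hij hji hpre
  refine ⟨main, fun i hpre => ?_⟩
  by_cases hcase : i ≤ j ∧ j < i + P.length
  · exact absurd hpre (main i hcase.1 hcase.2)
  · exact prefix_transfer S P j _ i (by omega) hpre
end

section
/- Let 𝒫 be a finite nonempty set of nonempty patterns with ε ∉ 𝒫. Every state of the KMP FSM reachable from the initial state ε is a prefix of some pattern in 𝒫 that contains no member of 𝒫 as a substring; conversely, every w ∈ pref(𝒫) containing no member of 𝒫 as a substring is a reachable state, reached by reading the string w itself from ε. -/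
/-- An infix of `v ++ [σ]` is either an infix of `v` or a suffix of `v ++ [σ]`. -/
lemma infix_concat_cases {α : Type*} {u v : List α} {σ : α} (h : u <:+: v ++ [σ]) :
    u <:+: v ∨ u <:+ v ++ [σ] := by
  obtain ⟨s, t, hst⟩ := h
  rcases List.eq_nil_or_concat t with rfl | ⟨t', σ', rfl⟩
  · right; exact ⟨s, by simpa using hst⟩
  · left
    have : (s ++ u ++ t') ++ [σ'] = v ++ [σ] := by simpa using hst
    have h2 := List.append_inj' this rfl
    exact ⟨s, t', h2.1⟩

/-- Every reachable state of the KMP FSM is a pattern prefix containing no member of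
`Ps` as a substring; conversely, every such prefix `w` is reachable, reached by reading
the string `w` itself from `ε`. -/
theorem kmp_reachable_states
    {α : Type*} (Ps : Set (List α)) (hne : Ps.Nonempty) (heps : ([] : List α) ∉ Ps) :
    (∀ v, (∃ S, KmpRun Ps S v) → v ∈ prefP Ps ∧ ∀ w ∈ Ps, ¬ w <:+: v) ∧
    (∀ w ∈ prefP Ps, (∀ p ∈ Ps, ¬ p <:+: w) → KmpRun Ps w w) := by
  constructor
  · rintro v ⟨S, hrun⟩
    induction hrun with
    | nil =>
      obtain ⟨P, hP⟩ := hne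
      refine ⟨⟨P, hP, List.nil_prefix⟩, ?_⟩
      intro w hw hinf
      have : w = [] := List.eq_nil_of_infix_nil hinf
      exact heps (this ▸ hw)
    | snoc S σ v w _ hstep ih =>
      obtain ⟨hnos, hsuf, hpref, _⟩ := hstep
      refine ⟨hpref, ?_⟩
      intro p hp hinf
      have hinf' : p <:+: v ++ [σ] := hinf.trans hsuf.isInfix
      rcases infix_concat_cases hinf' with h | h
      · exact ih.2 p hp h
      · exact hnos p h hp
  · intro w hw hclean
    induction w using List.reverseRecOn with
    | nil => exact KmpRun.nil
    | append_singleton w' σ ih =>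
      have hw' : w' ∈ prefP Ps := by
        obtain ⟨P, hP, hpre⟩ := hw
        exact ⟨P, hP, ((w'.prefix_append [σ]).trans hpre)⟩
      have hclean' : ∀ p ∈ Ps, ¬ p <:+: w' := fun p hp hinf =>
        hclean p hp (hinf.trans (w'.prefix_append [σ]).isInfix)
      refine KmpRun.snoc w' σ w' (w' ++ [σ]) (ih hw' hclean') ?_
      refine ⟨fun u hu hup => hclean u hup hu.isInfix, List.suffix_refl _, hw, ?_⟩
      intro u hu _
      exact hu.length_le
end

section
/- Let P be a pattern of length k over an alphabet with at least 3 characters, and let S be any string. Then there exists an eliminating set for P in S whose set of positions equals any given minimum hitting set H of the P-match intervals, and consequently the minimum number of character substitutions needed to make S free of P equals the minimum number of positions needed to hit all P-match intervals; in particular this minimum is computable and equals the size of the greedy hitting set. -/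
/-- `H` is a hitting set for the `P`-match intervals of `S`. -/
def HitsMatches {α : Type*} (S P : List α) (H : Finset ℕ) : Prop :=
  ∀ i, P <+: S.drop i → ∃ j ∈ H, i ≤ j ∧ j < i + P.length

section Aux
variable {α : Type*}

/-- pointwise-match form of `P <+: S.drop i`. -/
def PM (d : α) (P S : List α) (i : ℕ) : Prop :=
  i + P.length ≤ S.length ∧ ∀ t < P.length, S.getD (i+t) d = P.getD t d

lemma length_substitute (S : List α) (E : Finset ℕ) (c : ℕ → α) :
    (substitute S E c).length = S.length := by
  simp [substitute]

lemma getElem_substitute (S : List α) (E : Finset ℕ) (c : ℕ → α) (p : ℕ)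
    (h : p < S.length) :
    (substitute S E c)[p]'(by simpa [length_substitute] using h)
      = if p ∈ E then c p else S[p] := by
  simp [substitute, List.getElem_mapIdx]

lemma getD_substitute (S : List α) (E : Finset ℕ) (c : ℕ → α) (p : ℕ) (d : α) :
    (substitute S E c).getD p d
      = if p ∈ E ∧ p < S.length then c p else S.getD p d := by
  by_cases h : p < S.length
  · rw [List.getD_eq_getElem _ _ (by simpa [length_substitute] using h),
      getElem_substitute S E c p h]
    by_cases hE : p ∈ E
    · simp [hE, h]
    · simp [hE, h, List.getD_eq_getElem _ _ h]
  · rw [List.getD_eq_default _ _ (by simp [length_substitute]; omega),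
      List.getD_eq_default _ _ (by omega)]
    simp [h]

lemma prefix_drop_iff (d : α) (P S : List α) (hP : 1 ≤ P.length) (i : ℕ) :
    P <+: S.drop i ↔ PM d P S i := by
  constructor
  · intro h
    have hlen : P.length ≤ S.length - i := by simpa using h.length_le
    have hle : i + P.length ≤ S.length := by omega
    refine ⟨hle, fun t ht => ?_⟩
    have h1 : i + t < S.length := by omega
    rw [List.getD_eq_getElem _ _ h1, List.getD_eq_getElem _ _ ht]
    rw [h.getElem ht, List.getElem_drop]
  · rintro ⟨hle, hpt⟩
    rw [List.prefix_iff_eq_take]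
    apply List.ext_getElem
    · simp; omega
    · intro t h1 h2
      have ht : t < P.length := h1
      have h3 : i + t < S.length := by omega
      have := hpt t ht
      rw [List.getD_eq_getElem _ _ h3, List.getD_eq_getElem _ _ ht] at this
      rw [List.getElem_take, List.getElem_drop]
      exact this.symm

/-- Core index-chasing lemma. -/
lemma core (d : α) (P : List α) (f : ℕ → α) (j i₁ i₂ i₃ : ℕ)
    (h12 : i₁ < i₂) (h23 : i₂ < i₃)
    (c3 : i₃ ≤ j) (c1 : j < i₁ + P.length)
    (m1 : ∀ p, i₁ ≤ p → p < i₁ + P.length → p ≠ j → f p = P.getD (p - i₁) d)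
    (m2 : ∀ p, i₂ ≤ p → p < i₂ + P.length → p ≠ j → f p = P.getD (p - i₂) d)
    (m3 : ∀ p, i₃ ≤ p → p < i₃ + P.length → p ≠ j → f p = P.getD (p - i₃) d) :
    P.getD (j - i₁) d = P.getD (j - i₃) d := by
  have e1 : f (j - i₃ + i₂) = P.getD ((j - i₃ + i₂) - i₂) d :=
    m2 _ (by omega) (by omega) (by omega)
  have e2 : f (j - i₃ + i₂) = P.getD ((j - i₃ + i₂) - i₁) d :=
    m1 _ (by omega) (by omega) (by omega)
  have e3 : f (j - i₁ + i₂) = P.getD ((j - i₁ + i₂) - i₂) d :=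
    m2 _ (by omega) (by omega) (by omega)
  have e4 : f (j - i₁ + i₂) = P.getD ((j - i₁ + i₂) - i₃) d :=
    m3 _ (by omega) (by omega) (by omega)
  have k1 : (j - i₃ + i₂) - i₂ = j - i₃ := by omega
  have k2 : (j - i₃ + i₂) - i₁ = (j - i₁ + i₂) - i₃ := by omega
  have k3 : (j - i₁ + i₂) - i₂ = j - i₁ := by omega
  rw [k1] at e1; rw [k2] at e2; rw [k3] at e3
  rw [← e3, e4, ← e2, e1]

/-- `i` is a "punctured match" of `P` in `S` around `j`. -/
def Punct (d : α) (P S : List α) (j i : ℕ) : Prop :=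
  i ≤ j ∧ j < i + P.length ∧
    ∀ p, i ≤ p → p < i + P.length → p ≠ j → S.getD p d = P.getD (p - i) d

lemma core_sorted (d : α) (P S : List α) (j x y z : ℕ)
    (hx : Punct d P S j x) (hy : Punct d P S j y) (hz : Punct d P S j z)
    (hxy : x < y) (hyz : y < z) :
    P.getD (j - x) d = P.getD (j - z) d :=
  core d P (fun p => S.getD p d) j x y z hxy hyz hz.1 hx.2.1 hx.2.2 hy.2.2 hz.2.2

lemma danger_unique (d : α) (P S : List α) (j a : ℕ)
    (ha : Punct d P S j a) (haS : S.getD j d = P.getD (j - a) d)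
    (i i' : ℕ) (hi : Punct d P S j i) (hi' : Punct d P S j i')
    (hl : P.getD (j - i) d ≠ S.getD j d) (hl' : P.getD (j - i') d ≠ S.getD j d) :
    P.getD (j - i) d = P.getD (j - i') d := by
  have hai : a ≠ i := fun h => hl (by rw [← h, ← haS])
  have hai' : a ≠ i' := fun h => hl' (by rw [← h, ← haS])
  have main : ∀ u u', u < u' → Punct d P S j u → Punct d P S j u' →
      P.getD (j - u) d ≠ S.getD j d → P.getD (j - u') d ≠ S.getD j d →
      a ≠ u → a ≠ u' →
      P.getD (j - u) d = P.getD (j - u') d := by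
    intro u u' huu hu hu' hlu hlu' hau hau'
    rcases lt_trichotomy a u with h | h | h
    · exact absurd ((core_sorted d P S j a u u' ha hu hu' h huu).symm.trans haS.symm) hlu'
    · exact absurd h hau
    · rcases lt_trichotomy a u' with h2 | h2 | h2
      · exact core_sorted d P S j u a u' hu ha hu' h h2
      · exact absurd h2 hau'
      · exact absurd ((core_sorted d P S j u u' a hu hu' ha huu h2).trans haS.symm) hlu
  rcases lt_trichotomy i i' with h | h | h
  · exact main i i' h hi hi' hl hl' hai hai'
  · rw [h]
  · exact (main i' i h hi' hi hl' hl hai' hai).symm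

lemma exists_third [Fintype α] (hA : 3 ≤ Fintype.card α) (x y : α) :
    ∃ z : α, z ≠ x ∧ z ≠ y := by
  classical
  by_contra hcon
  push_neg at hcon
  have hsub : (Finset.univ : Finset α) ⊆ {x, y} := by
    intro z _
    by_cases h : z = x
    · simp [h]
    · simp [hcon z h]
  have := Finset.card_le_card hsub
  have h2 : ({x, y} : Finset α).card ≤ 2 :=
    le_trans (Finset.card_insert_le _ _) (by simp)
  rw [Finset.card_univ] at this
  omega

lemma elim_aux (d : α) [Fintype α] (hA : 3 ≤ Fintype.card α) (P : List α)
    (hP : 1 ≤ P.length) :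
    ∀ (n : ℕ) (S : List α) (H : Finset ℕ), H.card = n →
    (∀ i, PM d P S i → ∃ j ∈ H, i ≤ j ∧ j < i + P.length) →
    (∀ j ∈ H, ∃ a, PM d P S a ∧ a ≤ j ∧ j < a + P.length ∧
        ∀ j' ∈ H, a ≤ j' → j' < a + P.length → j' = j) →
    ∃ c : ℕ → α, (∀ j ∈ H, c j ≠ S.getD j d) ∧
      ∀ i, ¬ PM d P (substitute S H c) i := by
  intro n
  induction n with
  | zero =>
    intro S H hcard h1 h2
    have hH : H = ∅ := Finset.card_eq_zero.mp hcard
    subst hH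
    refine ⟨fun _ => d, by simp, fun i hi => ?_⟩
    have hsub : substitute S ∅ (fun _ => d) = S := by
      apply List.ext_getElem (by simp [length_substitute])
      intro p h1' h2'
      rw [getElem_substitute S ∅ _ p (by simpa [length_substitute] using h1')]
      simp
    rw [hsub] at hi
    obtain ⟨j, hj, _⟩ := h1 i hi
    exact absurd hj (Finset.notMem_empty j)
  | succ n IH =>
    intro S H hcard h1 h2
    obtain ⟨j₀, hj₀⟩ : H.Nonempty := Finset.card_pos.mp (by omega)
    obtain ⟨a₀, ha₀m, ha₀1, ha₀2, ha₀priv⟩ := h2 j₀ hj₀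
    have hPlen : 1 ≤ P.length := hP
    have hj₀len : j₀ < S.length := by have := ha₀m.1; omega
    have ha₀punct : Punct d P S j₀ a₀ :=
      ⟨ha₀1, ha₀2, fun p hp1 hp2 _ => by
        have := ha₀m.2 (p - a₀) (by omega)
        rwa [show a₀ + (p - a₀) = p by omega] at this⟩
    have ha₀letter : S.getD j₀ d = P.getD (j₀ - a₀) d := by
      have := ha₀m.2 (j₀ - a₀) (by omega)
      rwa [show a₀ + (j₀ - a₀) = j₀ by omega] at this
    have hchoice : ∃ ℓ₀ : α, ℓ₀ ≠ S.getD j₀ d ∧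
        ∀ i, Punct d P S j₀ i → ℓ₀ ≠ P.getD (j₀ - i) d := by
      by_cases hex : ∃ i, Punct d P S j₀ i ∧ P.getD (j₀ - i) d ≠ S.getD j₀ d
      · obtain ⟨iw, hiw, hw⟩ := hex
        obtain ⟨z, hz1, hz2⟩ := exists_third hA (S.getD j₀ d) (P.getD (j₀ - iw) d)
        refine ⟨z, hz1, fun i hi => ?_⟩
        by_cases hvv : P.getD (j₀ - i) d = S.getD j₀ d
        · rw [hvv]; exact hz1
        · rw [danger_unique d P S j₀ a₀ ha₀punct ha₀letter i iw hi hiw hvv hw]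
          exact hz2
      · push_neg at hex
        obtain ⟨z, hz1, _⟩ := exists_third hA (S.getD j₀ d) (S.getD j₀ d)
        exact ⟨z, hz1, fun i hi => by rw [hex i hi]; exact hz1⟩
    obtain ⟨ℓ₀, hlne, hlsafe⟩ := hchoice
    have hS'len : (substitute S {j₀} (fun _ => ℓ₀)).length = S.length :=
      length_substitute _ _ _
    have hS'getD : ∀ p, p ≠ j₀ →
        (substitute S {j₀} (fun _ => ℓ₀)).getD p d = S.getD p d := by
      intro p hp
      rw [getD_substitute]
      simp [hp]
    have hS'j₀ : (substitute S {j₀} (fun _ => ℓ₀)).getD j₀ d = ℓ₀ := by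
      rw [getD_substitute]
      simp [hj₀len]
    have hH'card : (H.erase j₀).card = n := by
      rw [Finset.card_erase_of_mem hj₀, hcard]; omega
    have h1' : ∀ i, PM d P (substitute S {j₀} (fun _ => ℓ₀)) i →
        ∃ j ∈ H.erase j₀, i ≤ j ∧ j < i + P.length := by
      intro i hi
      by_cases hcov : i ≤ j₀ ∧ j₀ < i + P.length
      · exfalso
        have hpunct : Punct d P S j₀ i := by
          refine ⟨hcov.1, hcov.2, fun p hp1 hp2 hpj => ?_⟩
          have := hi.2 (p - i) (by omega)
          rw [show i + (p - i) = p by omega] at this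
          rw [← hS'getD p hpj]; exact this
        have hlet : (substitute S {j₀} (fun _ => ℓ₀)).getD j₀ d = P.getD (j₀ - i) d := by
          have := hi.2 (j₀ - i) (by omega)
          rwa [show i + (j₀ - i) = j₀ by omega] at this
        rw [hS'j₀] at hlet
        exact hlsafe i hpunct hlet
      · have hiS : PM d P S i := by
          refine ⟨by rw [← hS'len]; exact hi.1, fun t ht => ?_⟩
          rw [← hS'getD (i + t) (fun h => hcov ⟨by omega, by omega⟩)]
          exact hi.2 t ht
        obtain ⟨j, hjH, hj1, hj2⟩ := h1 i hiS
        refine ⟨j, Finset.mem_erase.mpr ⟨fun h => hcov (h ▸ ⟨hj1, hj2⟩), hjH⟩, hj1, hj2⟩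
    have h2' : ∀ j ∈ H.erase j₀, ∃ a, PM d P (substitute S {j₀} (fun _ => ℓ₀)) a ∧
        a ≤ j ∧ j < a + P.length ∧
        ∀ j' ∈ H.erase j₀, a ≤ j' → j' < a + P.length → j' = j := by
      intro j hj
      have hjH : j ∈ H := Finset.mem_of_mem_erase hj
      have hjne : j ≠ j₀ := Finset.ne_of_mem_erase hj
      obtain ⟨a, ham, ha1, ha2, hapriv⟩ := h2 j hjH
      have hj₀out : ¬ (a ≤ j₀ ∧ j₀ < a + P.length) :=
        fun h => hjne (hapriv j₀ hj₀ h.1 h.2).symm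
      refine ⟨a, ⟨by rw [hS'len]; exact ham.1, fun t ht => ?_⟩, ha1, ha2,
        fun j' hj' => hapriv j' (Finset.mem_of_mem_erase hj')⟩
      rw [hS'getD (a + t) (fun h => hj₀out ⟨by omega, by omega⟩)]
      exact ham.2 t ht
    obtain ⟨c', hc'ne, hc'nm⟩ := IH (substitute S {j₀} (fun _ => ℓ₀)) (H.erase j₀)
      hH'card h1' h2'
    refine ⟨fun p => if p = j₀ then ℓ₀ else c' p, ?_, ?_⟩
    · intro j hjH
      by_cases hpj : j = j₀
      · subst hpj
        simpa using hlne
      · have hcj : (fun p => if p = j₀ then ℓ₀ else c' p) j = c' j := by simp [hpj]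
        rw [hcj, ← hS'getD j hpj]
        exact hc'ne j (Finset.mem_erase.mpr ⟨hpj, hjH⟩)
    · intro i
      have hkey : substitute S H (fun p => if p = j₀ then ℓ₀ else c' p)
          = substitute (substitute S {j₀} (fun _ => ℓ₀)) (H.erase j₀) c' := by
        apply List.ext_getElem (by simp [length_substitute])
        intro p hp1 hp2
        have hpS : p < S.length := by simpa [length_substitute] using hp1
        have hpS' : p < (substitute S {j₀} (fun _ => ℓ₀)).length := by
          rw [hS'len]; exact hpS
        rw [getElem_substitute S H _ p hpS,
          getElem_substitute (substitute S {j₀} (fun _ => ℓ₀)) (H.erase j₀) c' p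
            (by rw [hS'len]; exact hpS)]
        have hS'p : (substitute S {j₀} (fun _ => ℓ₀))[p]'hpS'
            = if p ∈ ({j₀} : Finset ℕ) then ℓ₀ else S[p]'hpS :=
          getElem_substitute S {j₀} (fun _ => ℓ₀) p hpS
        by_cases hpj : p = j₀
        · subst hpj
          rw [if_pos hj₀, if_neg (Finset.notMem_erase p H), hS'p,
            if_pos (Finset.mem_singleton_self p)]
          simp
        · rw [hS'p, if_neg (show p ∉ ({j₀} : Finset ℕ) by simpa using hpj)]
          by_cases hpH : p ∈ H
          · rw [if_pos hpH, if_pos (Finset.mem_erase.mpr ⟨hpj, hpH⟩)]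
            simp [hpj]
          · rw [if_neg hpH, if_neg (fun h => hpH (Finset.mem_of_mem_erase h))]
      rw [hkey]
      exact hc'nm i

end Aux

section Main
variable {α : Type*}

lemma elim_hits (d : α) (S P : List α) (hP : 1 ≤ P.length) (E : Finset ℕ) (c : ℕ → α)
    (helim : ∀ i, ¬ P <+: (substitute S E c).drop i) : HitsMatches S P E := by
  intro i hi
  by_contra hno
  push_neg at hno
  apply helim i
  rw [prefix_drop_iff d P _ hP]
  obtain ⟨hlen, hpt⟩ := (prefix_drop_iff d P S hP i).mp hi
  refine ⟨by rw [length_substitute]; exact hlen, fun t ht => ?_⟩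
  rw [getD_substitute]
  have hnot : ¬(i + t ∈ E ∧ i + t < S.length) := by
    rintro ⟨hmem, -⟩
    have := hno (i+t) hmem (by omega)
    omega
  rw [if_neg hnot]
  exact hpt t ht

lemma part1 (d : α) [Fintype α] (hA : 3 ≤ Fintype.card α) (S P : List α)
    (hP : 1 ≤ P.length) (H : Finset ℕ) (hhit : HitsMatches S P H)
    (hmin : ∀ H', HitsMatches S P H' → H.card ≤ H'.card) :
    ∃ c : ℕ → α, (∀ j ∈ H, c j ≠ S.getD j (c j)) ∧
      ∀ i, ¬ P <+: (substitute S H c).drop i := by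
  have h1 : ∀ i, PM d P S i → ∃ j ∈ H, i ≤ j ∧ j < i + P.length :=
    fun i hi => hhit i ((prefix_drop_iff d P S hP i).mpr hi)
  have h2 : ∀ j ∈ H, ∃ a, PM d P S a ∧ a ≤ j ∧ j < a + P.length ∧
      ∀ j' ∈ H, a ≤ j' → j' < a + P.length → j' = j := by
    intro j hj
    by_contra hno
    push_neg at hno
    have hhit' : HitsMatches S P (H.erase j) := by
      intro i hi
      obtain ⟨j'', hj''H, hj''1, hj''2⟩ := hhit i hi
      by_cases hcase : j'' = j
      · subst hcase
        obtain ⟨j', hj'H, hw1, hw2, hj'ne⟩ :=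
          hno i ((prefix_drop_iff d P S hP i).mp hi) hj''1 hj''2
        exact ⟨j', Finset.mem_erase.mpr ⟨hj'ne, hj'H⟩, hw1, hw2⟩
      · exact ⟨j'', Finset.mem_erase.mpr ⟨hcase, hj''H⟩, hj''1, hj''2⟩
    have hle := hmin _ hhit'
    rw [Finset.card_erase_of_mem hj] at hle
    have hpos : 0 < H.card := Finset.card_pos.mpr ⟨j, hj⟩
    omega
  obtain ⟨c, hcne, hcnm⟩ := elim_aux d hA P hP H.card S H rfl h1 h2
  refine ⟨c, ?_, ?_⟩
  · intro j hj
    have hjlen : j < S.length := by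
      obtain ⟨a, ham, ha1, ha2, -⟩ := h2 j hj
      have := ham.1; omega
    have heq : S.getD j (c j) = S.getD j d := by
      rw [List.getD_eq_getElem _ _ hjlen, List.getD_eq_getElem _ _ hjlen]
    rw [heq]
    exact hcne j hj
  · intro i hcontra
    exact hcnm i ((prefix_drop_iff d P _ hP i).mp hcontra)
end Main

/-- Over an alphabet with at least 3 characters: any minimum hitting set `H` of the
`P`-match intervals of `S` is the set of positions of some eliminating set (with each
substituted character different from the original), and consequently the minimum number
of character substitutions needed to rid `S` of `P` equals the minimum size of a
hitting set of the `P`-match intervals. -/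
theorem eliminating_on_min_hitting_positions
    {α : Type*} [Fintype α] (hA : 3 ≤ Fintype.card α)
    (S P : List α) (hP : 1 ≤ P.length) :
    (∀ H : Finset ℕ,
      HitsMatches S P H →
      (∀ H' : Finset ℕ, HitsMatches S P H' → H.card ≤ H'.card) →
      (∀ j ∈ H, j < S.length) →
      ∃ c : ℕ → α, (∀ j ∈ H, c j ≠ S.getD j (c j)) ∧
        ∀ i, ¬ P <+: (substitute S H c).drop i) ∧
    sInf {n : ℕ | ∃ (E : Finset ℕ) (c : ℕ → α),
        E.card = n ∧ (∀ j ∈ E, c j ≠ S.getD j (c j)) ∧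
        ∀ i, ¬ P <+: (substitute S E c).drop i}
      = sInf {n : ℕ | ∃ H : Finset ℕ, H.card = n ∧ HitsMatches S P H} := by
  classical
  obtain ⟨d⟩ : Nonempty α := Fintype.card_pos_iff.mp (by omega)
  constructor
  · intro H hhit hmin _
    exact part1 d hA S P hP H hhit hmin
  · have hBne : {n : ℕ | ∃ H : Finset ℕ, H.card = n ∧ HitsMatches S P H}.Nonempty := by
      refine ⟨(Finset.range S.length).card, Finset.range S.length, rfl, fun i hi => ?_⟩
      have hlen := ((prefix_drop_iff d P S hP i).mp hi).1
      exact ⟨i, Finset.mem_range.mpr (by omega), le_refl i, by omega⟩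
    obtain ⟨H₀, hH₀card, hH₀hit⟩ := Nat.sInf_mem hBne
    have hH₁hit : HitsMatches S P (H₀.filter (· < S.length)) := by
      intro i hi
      obtain ⟨j, hj, hj1, hj2⟩ := hH₀hit i hi
      have hlen := ((prefix_drop_iff d P S hP i).mp hi).1
      exact ⟨j, Finset.mem_filter.mpr ⟨hj, by omega⟩, hj1, hj2⟩
    have hH₁le : (H₀.filter (· < S.length)).card ≤ H₀.card := Finset.card_filter_le _ _
    have h1 : sInf {n : ℕ | ∃ H : Finset ℕ, H.card = n ∧ HitsMatches S P H}
        ≤ (H₀.filter (· < S.length)).card := Nat.sInf_le ⟨_, rfl, hH₁hit⟩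
    have hH₁card : (H₀.filter (· < S.length)).card
        = sInf {n : ℕ | ∃ H : Finset ℕ, H.card = n ∧ HitsMatches S P H} := by omega
    have hH₁min : ∀ H', HitsMatches S P H' → (H₀.filter (· < S.length)).card ≤ H'.card :=
      fun H' h => hH₁card ▸ Nat.sInf_le ⟨H', rfl, h⟩
    obtain ⟨c, hc1, hc2⟩ := part1 d hA S P hP _ hH₁hit hH₁min
    have hmemA : sInf {n : ℕ | ∃ H : Finset ℕ, H.card = n ∧ HitsMatches S P H}
        ∈ {n : ℕ | ∃ (E : Finset ℕ) (c : ℕ → α),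
          E.card = n ∧ (∀ j ∈ E, c j ≠ S.getD j (c j)) ∧
          ∀ i, ¬ P <+: (substitute S E c).drop i} :=
      ⟨_, c, hH₁card, hc1, hc2⟩
    have hAne : {n : ℕ | ∃ (E : Finset ℕ) (c : ℕ → α),
        E.card = n ∧ (∀ j ∈ E, c j ≠ S.getD j (c j)) ∧
        ∀ i, ¬ P <+: (substitute S E c).drop i}.Nonempty := ⟨_, hmemA⟩
    apply le_antisymm
    · exact Nat.sInf_le hmemA
    · obtain ⟨E, c', hEcard, hc'1, hc'2⟩ := Nat.sInf_mem hAne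
      exact hEcard ▸ Nat.sInf_le ⟨E, rfl, elim_hits d S P hP E c' hc'2⟩
end
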